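/- For every γ > 0 there exists N such that for all n ≥ N the following holds: if G is a loopless weighted graph on n vertices with edge weights in [0,1] that is a γ-expander, then the mixing time of the lazy random walk on G satisfies t_mix(G) ≤ (64/γ⁴) · log n. -/

import Mathlib

open Finset Filter

noncomputable section

variable {V : Type*} [Fintype V] [DecidableEq V]

/-- The degree of a vertex of a weighted graph: the sum of the incident edge weights. -/
def wdeg (w : V → V → ℝ) (v : V) : ℝ := ∑ u, w v u

/-- The stationary distribution of the random walk on a weighted graph. -/
def statDist (w : V → V → ℝ) (v : V) : ℝ := wdeg w v / ∑ u, wdeg w u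

/-- The one-step transition probability of the random walk. -/
def wstep (w : V → V → ℝ) (x y : V) : ℝ := w x y / wdeg w x

/-- The probability that the random walk follows a given path of `k` steps. -/
def pathWeight (w : V → V → ℝ) {k : ℕ} (x : Fin (k + 1) → V) : ℝ :=
  ∏ i : Fin k, wstep w (x i.castSucc) (x i.succ)

open Classical in
/-- The probability that the first `k` steps of the random walk started at `u` satisfy `P`. -/
def prFrom (w : V → V → ℝ) (u : V) (k : ℕ) (P : (Fin (k + 1) → V) → Prop) : ℝ :=
  ∑ x : Fin (k + 1) → V, if x 0 = u ∧ P x then pathWeight w x else 0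

open Classical in
/-- The probability that the first `k` steps of the stationary random walk satisfy `P`. -/
def prStat (w : V → V → ℝ) (k : ℕ) (P : (Fin (k + 1) → V) → Prop) : ℝ :=
  ∑ x : Fin (k + 1) → V, if P x then statDist w (x 0) * pathWeight w x else 0

/-- `Cap_k(A)`: the probability that a stationary random walk hits `A` within `k` steps. -/
def capa (w : V → V → ℝ) (k : ℕ) (A : Set V) : ℝ :=
  prStat w k fun x => ∃ i, x i ∈ A

/-- A weighted graph: symmetric weights in `[0,1]`, no loops. -/
def IsWeightedGraph (w : V → V → ℝ) : Prop :=
  (∀ x y, w x y = w y x) ∧ (∀ x y, w x y ∈ Set.Icc (0 : ℝ) 1) ∧ (∀ x, w x x = 0)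

/-- Connectedness of a weighted graph: the graph of positive-weight edges is connected. -/
def ConnectedGraph (w : V → V → ℝ) : Prop :=
  (SimpleGraph.fromRel fun x y => 0 < w x y).Connected

/-- `G` is a `γ`-expander: `w(U, Uᶜ) ≥ γ|U|(|V|-|U|)` for all `U ⊆ V`. -/
def IsExpander (w : V → V → ℝ) (γ : ℝ) : Prop :=
  ∀ U : Finset V, γ * U.card * ((Fintype.card V : ℝ) - U.card) ≤ ∑ u ∈ U, ∑ v ∈ Uᶜ, w u v

/-- The transition matrix of the lazy random walk. -/
def lazyStep (w : V → V → ℝ) : Matrix V V ℝ := fun x y =>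
  (if x = y then (1 : ℝ) / 2 else 0) + w x y / (2 * wdeg w x)

/-- The mixing time of the lazy random walk. -/
def mixingTime (w : V → V → ℝ) : ℕ :=
  sInf {t : ℕ | ∀ x y, |(lazyStep w ^ t) x y - statDist w y| ≤ 1 / 4}

/-- `P_π(τ_A < τ_B)`: the probability that the stationary walk hits `A` strictly before `B`. -/
def prHitBefore (w : V → V → ℝ) (A B : Set V) : ℝ :=
  ⨆ k : ℕ, prStat w k fun x => ∃ i, x i ∈ A ∧ ∀ j ≤ i, x j ∉ B

/-- `P_u(τ_A < τ_B)`: the probability that the walk from `u` hits `A` strictly before `B`. -/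
def prHitBeforeFrom (w : V → V → ℝ) (u : V) (A B : Set V) : ℝ :=
  ⨆ k : ℕ, prFrom w u k fun x => ∃ i, x i ∈ A ∧ ∀ j ≤ i, x j ∉ B

open Fin.NatCast in
/-- `P_u(τ_A < τ_B⁺)`: the walk from `u` hits `A` strictly before returning to `B`. -/
def prHitBeforeRet (w : V → V → ℝ) (u : V) (A B : Set V) : ℝ :=
  ⨆ k : ℕ, prFrom w u k fun x => ∃ i, x i ∈ A ∧ ∀ j, 0 < (j : ℕ) → j ≤ i → x j ∉ B

end

/-!
Cutting along the level sets of `f |f|` and applying the expansion to every level set gives the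
Cheeger-type bound `γ² ∑ (f x - f y)² ≤ 8 ∑ w(x,y) (f x - f y)²`. As every degree lies between
`γ (n - 1)` and `n - 1`, this is a Poincaré inequality for the lazy walk with constant `γ³/32`,
uniformly in `n`. Laziness turns it into a contraction of the `π`-variance by `1 - γ³/64` per
step, so the walk mixes within `⌈64 γ⁻³ log (16/γ)⌉` steps whatever `n` is, and this number is
below `(64/γ⁴) log n` once `n` is large.
-/

open Matrix MeasureTheory

lemma sq_sub_le_two_mul_abs_sub_mul_abs (a b : ℝ) : (a - b) ^ 2 ≤ 2 * |a * |a| - (b * |b|)| := by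
  wlog hab : b ≤ a generalizing a b
  · simpa only [abs_sub_comm, sub_sq_comm] using this b a (le_of_not_ge hab)
  rcases le_total 0 a with ha | ha <;> rcases le_total 0 b with hb | hb <;>
    simp only [abs_of_nonneg, abs_of_nonpos, ha, hb] <;>
    rw [abs_of_nonneg (by nlinarith)] <;> nlinarith [sq_nonneg (a + b)]

lemma abs_mul_abs_sub_mul_abs_le (a b : ℝ) : |a * |a| - (b * |b|)| ≤ |a - b| * (|a| + |b|) := by
  wlog hab : b ≤ a generalizing a b
  · simpa only [abs_sub_comm, add_comm] using this b a (le_of_not_ge hab)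
  rcases le_total 0 a with ha | ha <;> rcases le_total 0 b with hb | hb <;>
    simp only [abs_of_nonneg, abs_of_nonpos, ha, hb] <;>
    rw [abs_of_nonneg (by nlinarith), abs_of_nonneg (sub_nonneg.2 hab)] <;> nlinarith

lemma one_sub_pow_le_of_log_inv_le {a ε : ℝ} {t : ℕ} (ha : a ≤ 1) (hε : 0 < ε)
    (ht : Real.log ε⁻¹ ≤ a * t) : (1 - a) ^ t ≤ ε := calc
  (1 - a) ^ t ≤ Real.exp (-a) ^ t := pow_le_pow_left₀ (by linarith) (Real.one_sub_le_exp_neg a) t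
  _ = Real.exp (-(a * t)) := by rw [← Real.exp_nat_mul]; ring_nf
  _ ≤ Real.exp (-Real.log ε⁻¹) := Real.exp_le_exp.2 (neg_le_neg ht)
  _ = ε := by rw [Real.log_inv, neg_neg, Real.exp_log hε]

lemma abs_ite_le_sub_ite_le (a b t : ℝ) :
    |(if t ≤ a then (1 : ℝ) else 0) - (if t ≤ b then 1 else 0)| =
      (Set.Ioc (min a b) (max a b)).indicator 1 t := by
  rcases le_or_gt t a with ha | ha <;> rcases le_or_gt t b with hb | hb <;>
    simp [ha, hb, not_le_of_gt]

lemma integrable_abs_ite_le_sub_ite_le (a b : ℝ) :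
    Integrable fun t : ℝ => |(if t ≤ a then (1 : ℝ) else 0) - (if t ≤ b then 1 else 0)| := by
  simp_rw [abs_ite_le_sub_ite_le]
  exact (integrable_indicator_iff measurableSet_Ioc).2 (integrableOn_const measure_Ioc_lt_top.ne)

lemma integral_abs_ite_le_sub_ite_le (a b : ℝ) :
    ∫ t, |(if t ≤ a then (1 : ℝ) else 0) - (if t ≤ b then 1 else 0)| = |a - b| := by
  simp_rw [abs_ite_le_sub_ite_le]
  rw [integral_indicator_one measurableSet_Ioc, Real.volume_real_Ioc, max_sub_min_eq_abs,
    abs_sub_comm, max_eq_left (abs_nonneg _)]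

section FiniteSums

variable {ι : Type*} [Fintype ι]

lemma sum_sum_mul_mul_sub_sq (p u : ι → ℝ) :
    ∑ i, ∑ j, p i * p j * (u i - u j) ^ 2 =
      2 * ((∑ i, p i) * ∑ i, p i * u i ^ 2 - (∑ i, p i * u i) ^ 2) := by
  have h (i j : ι) : p i * p j * (u i - u j) ^ 2 =
      p j * (p i * u i ^ 2) + p i * (p j * u j ^ 2) - 2 * ((p i * u i) * (p j * u j)) := by
    ring
  simp only [h, sum_sub_distrib, sum_add_distrib, ← mul_sum, ← sum_mul]
  ring

lemma sum_sum_mul_abs_sub_le_of_forall_cut {c d : ι → ι → ℝ} (g : ι → ℝ)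
    (hcut : ∀ U : Finset ι,
      ∑ i, ∑ j, c i j * |(U : Set ι).indicator 1 i - (U : Set ι).indicator 1 j| ≤
        ∑ i, ∑ j, d i j * |(U : Set ι).indicator 1 i - (U : Set ι).indicator 1 j|) :
    ∑ i, ∑ j, c i j * |g i - g j| ≤ ∑ i, ∑ j, d i j * |g i - g j| := by
  classical
  set F : ι → ι → ℝ → ℝ :=
    fun i j t => |(if t ≤ g i then (1 : ℝ) else 0) - (if t ≤ g j then 1 else 0)|
  have hF (e : ι → ι → ℝ) : Integrable fun t => ∑ i, ∑ j, e i j * F i j t :=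
    integrable_finsetSum _ fun i _ => integrable_finsetSum _ fun j _ =>
      (integrable_abs_ite_le_sub_ite_le _ _).const_mul _
  -- each `|g i - g j|` is the measure of the thresholds `t` that separate `g i` and `g j`
  have hlayer (e : ι → ι → ℝ) :
      ∑ i, ∑ j, e i j * |g i - g j| = ∫ t, ∑ i, ∑ j, e i j * F i j t := by
    rw [integral_finsetSum _ fun i _ => integrable_finsetSum _ fun j _ =>
      (integrable_abs_ite_le_sub_ite_le _ _).const_mul _]
    refine sum_congr rfl fun i _ => ?_
    rw [integral_finsetSum _ fun j _ => (integrable_abs_ite_le_sub_ite_le _ _).const_mul _]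
    simp only [integral_const_mul, integral_abs_ite_le_sub_ite_le]
  rw [hlayer c, hlayer d]
  refine integral_mono (hF c) (hF d) fun t => ?_
  simpa [F, Set.indicator_apply] using hcut (univ.filter fun i => t ≤ g i)

end FiniteSums

section MarkovChain

variable {ι : Type*} [Fintype ι]

noncomputable def dirichletForm (P : Matrix ι ι ℝ) (π u : ι → ℝ) : ℝ :=
  (∑ i, ∑ j, π i * P i j * (u i - u j) ^ 2) / 2

lemma mul_sum_mul_sub_sq_le {p : ι → ℝ} (hp0 : ∀ j, 0 ≤ p j) (hp1 : ∑ j, p j = 1)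
    (u : ι → ℝ) (i : ι) :
    p i * ∑ j, p j * (u i - u j) ^ 2 ≤ 2 * (∑ j, p j * u j ^ 2 - (∑ j, p j * u j) ^ 2) := by
  rw [← one_mul (∑ j, p j * u j ^ 2), ← hp1, ← sum_sum_mul_mul_sub_sq, mul_sum]
  simp only [← mul_assoc]
  exact single_le_sum (f := fun i => ∑ j, p i * p j * (u i - u j) ^ 2)
    (fun i _ => sum_nonneg fun j _ => by have := hp0 i; have := hp0 j; positivity) (mem_univ i)

variable [DecidableEq ι]

lemma sum_mul_mulVec_sq_add_dirichletForm_le {P : Matrix ι ι ℝ} {π : ι → ℝ}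
    (hP : P ∈ rowStochastic ℝ ι) (hdiag : ∀ i, 1 / 2 ≤ P i i)
    (hπ0 : ∀ i, 0 ≤ π i) (hπ : π ᵥ* P = π) (u : ι → ℝ) :
    ∑ i, π i * (P *ᵥ u) i ^ 2 + dirichletForm P π u / 2 ≤ ∑ i, π i * u i ^ 2 := by
  -- the variance of `u` after one step from `i` is at least `P i i / 2 ≥ 1 / 4` times the
  -- local energy at `i`
  have hrow (i : ι) :
      (P *ᵥ u) i ^ 2 + (∑ j, P i j * (u i - u j) ^ 2) / 4 ≤ ∑ j, P i j * u j ^ 2 := by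
    have h := mul_sum_mul_sub_sq_le (fun j => nonneg_of_mem_rowStochastic hP (j := j))
      (sum_row_of_mem_rowStochastic hP i) u i
    have h0 : 0 ≤ ∑ j, P i j * (u i - u j) ^ 2 :=
      sum_nonneg fun j _ => mul_nonneg (nonneg_of_mem_rowStochastic hP) (sq_nonneg _)
    simp only [mulVec, dotProduct]
    nlinarith [mul_le_mul_of_nonneg_right (hdiag i) h0]
  have hstat : ∑ i, π i * ∑ j, P i j * u j ^ 2 = ∑ j, π j * u j ^ 2 := by
    simpa [hπ, dotProduct, mulVec] using dotProduct_mulVec π P fun j => u j ^ 2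
  calc ∑ i, π i * (P *ᵥ u) i ^ 2 + dirichletForm P π u / 2
      = ∑ i, π i * ((P *ᵥ u) i ^ 2 + (∑ j, P i j * (u i - u j) ^ 2) / 4) := by
        simp only [dirichletForm, mul_add, sum_add_distrib, mul_div_assoc', mul_sum, sum_div,
          mul_assoc]
        ring_nf
    _ ≤ ∑ i, π i * ∑ j, P i j * u j ^ 2 :=
        sum_le_sum fun i _ => mul_le_mul_of_nonneg_left (hrow i) (hπ0 i)
    _ = ∑ i, π i * u i ^ 2 := hstat

lemma sum_mul_pow_mulVec_sq_le {P : Matrix ι ι ℝ} {π : ι → ℝ} {β : ℝ} (hβ : 0 ≤ β)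
    (hπ : π ᵥ* P = π)
    (hP : ∀ u, π ⬝ᵥ u = 0 → ∑ i, π i * (P *ᵥ u) i ^ 2 ≤ β * ∑ i, π i * u i ^ 2)
    {u : ι → ℝ} (hu : π ⬝ᵥ u = 0) (t : ℕ) :
    ∑ i, π i * (P ^ t *ᵥ u) i ^ 2 ≤ β ^ t * ∑ i, π i * u i ^ 2 := by
  have hmean (t : ℕ) : π ⬝ᵥ (P ^ t *ᵥ u) = 0 := by
    induction t with
    | zero => simpa using hu
    | succ t ih => rw [pow_succ', ← mulVec_mulVec, dotProduct_mulVec, hπ, ih]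
  induction t with
  | zero => simp
  | succ t ih =>
    rw [pow_succ', ← mulVec_mulVec, pow_succ', mul_assoc]
    exact (hP _ (hmean t)).trans (mul_le_mul_of_nonneg_left ih hβ)

lemma sq_apply_sub_le_of_contraction {M : Matrix ι ι ℝ} {π : ι → ℝ} {b : ℝ}
    (hb : 0 ≤ b) (hπ0 : ∀ i, 0 < π i) (hπ1 : ∑ i, π i = 1) (hM1 : ∀ i, ∑ j, M i j = 1)
    (hM : ∀ u, π ⬝ᵥ u = 0 → ∑ i, π i * (M *ᵥ u) i ^ 2 ≤ b * ∑ i, π i * u i ^ 2)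
    (i j : ι) :
    (M i j - π j) ^ 2 ≤ b * π j / π i := by
  -- test against the density of `δ_j` with respect to `π`, centred
  set u : ι → ℝ := fun k => (if k = j then 1 / π j else 0) - 1
  have hπi := hπ0 i
  have hπj := hπ0 j
  have hu : π ⬝ᵥ u = 0 := by
    simp [u, dotProduct, mul_sub, hπ1, hπj.ne']
  have hMu : (M *ᵥ u) i = M i j / π j - 1 := by
    simp [u, mulVec, dotProduct, mul_sub, hM1, div_eq_mul_inv]
  have hnorm : ∑ k, π k * u k ^ 2 = 1 / π j - 1 := by
    simp [u, sub_sq, mul_add, mul_sub, sum_add_distrib, sum_sub_distrib, hπ1]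
    field_simp
    ring
  have h : π i * (M i j / π j - 1) ^ 2 ≤ b / π j := calc
    π i * (M i j / π j - 1) ^ 2 ≤ ∑ k, π k * (M *ᵥ u) k ^ 2 := by
      rw [← hMu]
      exact single_le_sum (f := fun k => π k * (M *ᵥ u) k ^ 2)
        (fun k _ => mul_nonneg (hπ0 k).le (sq_nonneg _)) (mem_univ i)
    _ ≤ b * (1 / π j) := by
      refine (hM u hu).trans (mul_le_mul_of_nonneg_left ?_ hb)
      linarith
    _ = b / π j := mul_one_div b (π j)
  have e : (M i j - π j) ^ 2 = π j ^ 2 * (M i j / π j - 1) ^ 2 := by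
    field_simp
  rw [le_div_iff₀ hπi, e]
  rw [le_div_iff₀ hπj] at h
  nlinarith

end MarkovChain

section WeightedGraph

variable {V : Type*} [Fintype V] {w : V → V → ℝ} {γ : ℝ}

lemma wdeg_nonneg (hw0 : ∀ x y, 0 ≤ w x y) (v : V) : 0 ≤ wdeg w v :=
  sum_nonneg fun u _ => hw0 v u

lemma wdeg_le_card_sub_one (hw1 : ∀ x y, w x y ≤ 1) (hloop : ∀ x, w x x = 0) (v : V) :
    wdeg w v ≤ Fintype.card V - 1 := by
  classical
  calc wdeg w v = ∑ u ∈ univ.erase v, w v u := (sum_erase _ (hloop v)).symm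
    _ ≤ #(univ.erase v) • (1 : ℝ) := sum_le_card_nsmul _ _ _ fun u _ => hw1 v u
    _ = Fintype.card V - 1 := by
      rw [nsmul_one, card_erase_of_mem (mem_univ v), card_univ,
        Nat.cast_pred (Fintype.card_pos_iff.2 ⟨v⟩)]

lemma sum_wdeg_pos [Nonempty V] (hd : ∀ v, 0 < wdeg w v) : 0 < ∑ v, wdeg w v :=
  sum_pos (fun v _ => hd v) univ_nonempty

lemma sum_statDist [Nonempty V] (hd : ∀ v, 0 < wdeg w v) : ∑ v, statDist w v = 1 := by
  simp only [statDist, ← sum_div, div_self (sum_wdeg_pos hd).ne']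

lemma statDist_pos [Nonempty V] (hd : ∀ v, 0 < wdeg w v) (v : V) : 0 < statDist w v :=
  div_pos (hd v) (sum_wdeg_pos hd)

lemma sum_wdeg_mul_statDist [Nonempty V] (hd : ∀ v, 0 < wdeg w v) (v : V) :
    (∑ u, wdeg w u) * statDist w v = wdeg w v :=
  mul_div_cancel₀ _ (sum_wdeg_pos hd).ne'

lemma sq_sum_sum_mul_abs_sub_mul_add_abs_le (hw0 : ∀ x y, 0 ≤ w x y) (hw1 : ∀ x y, w x y ≤ 1)
    (f : V → ℝ) :
    (∑ x, ∑ y, w x y * (|f x - f y| * (|f x| + |f y|))) ^ 2 ≤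
      (∑ x, ∑ y, w x y * (f x - f y) ^ 2) * (4 * Fintype.card V * ∑ x, f x ^ 2) := calc
  _ ≤ (∑ x, ∑ y, w x y * (f x - f y) ^ 2) * ∑ x, ∑ y, w x y * (|f x| + |f y|) ^ 2 := by
    simp only [← Fintype.sum_prod_type']
    refine sum_sq_le_sum_mul_sum_of_sq_le_mul _ (fun p _ => by have := hw0 p.1 p.2; positivity)
      (fun p _ => by have := hw0 p.1 p.2; positivity) fun p _ => le_of_eq ?_
    rw [← sq_abs (f p.1 - f p.2)]
    ring
  _ ≤ (∑ x, ∑ y, w x y * (f x - f y) ^ 2) * ∑ x, ∑ y, 2 * (f x ^ 2 + f y ^ 2) := by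
    refine mul_le_mul_of_nonneg_left (sum_le_sum fun x _ => sum_le_sum fun y _ => ?_)
      (sum_nonneg fun x _ => sum_nonneg fun y _ => mul_nonneg (hw0 x y) (sq_nonneg _))
    calc w x y * (|f x| + |f y|) ^ 2 ≤ 1 * (|f x| + |f y|) ^ 2 := by gcongr; exact hw1 x y
      _ ≤ 2 * (f x ^ 2 + f y ^ 2) := by
        rw [one_mul, ← sq_abs (f x), ← sq_abs (f y)]
        nlinarith [sq_nonneg (|f x| - |f y|)]
  _ = _ := by
    simp only [mul_add, sum_add_distrib, ← mul_sum, sum_const, card_univ, nsmul_eq_mul]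
    ring

variable [DecidableEq V]

lemma sum_sum_mul_abs_indicator_sub_indicator (c : V → V → ℝ) (U : Finset V) :
    ∑ x, ∑ y, c x y * |(U : Set V).indicator 1 x - (U : Set V).indicator 1 y| =
      ∑ x ∈ U, ∑ y ∈ Uᶜ, c x y + ∑ x ∈ Uᶜ, ∑ y ∈ U, c x y := by
  have h (x y : V) : c x y * |(U : Set V).indicator 1 x - (U : Set V).indicator 1 y| =
      (if x ∈ U ∧ y ∈ Uᶜ then c x y else 0) + (if x ∈ Uᶜ ∧ y ∈ U then c x y else 0) := by
    by_cases hx : x ∈ U <;> by_cases hy : y ∈ U <;> simp [hx, hy]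
  simp only [h, sum_add_distrib, ite_and, sum_ite_irrel, sum_ite_mem, univ_inter, sum_const_zero]

lemma IsExpander.sum_sum_mul_abs_indicator_sub_indicator_le (hexp : IsExpander w γ)
    (U : Finset V) :
    ∑ x, ∑ y, γ * |(U : Set V).indicator 1 x - (U : Set V).indicator 1 y| ≤
      ∑ x, ∑ y, w x y * |(U : Set V).indicator 1 x - (U : Set V).indicator 1 y| := by
  have hcard : (#U : ℝ) + #Uᶜ = Fintype.card V := by exact_mod_cast card_add_card_compl U
  have hU := hexp U
  have hUc := hexp Uᶜ
  rw [compl_compl, show (Fintype.card V : ℝ) - #Uᶜ = #U by linarith] at hUc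
  rw [show (Fintype.card V : ℝ) - #U = #Uᶜ by linarith] at hU
  simp only [sum_sum_mul_abs_indicator_sub_indicator, sum_const, nsmul_eq_mul]
  linarith

lemma IsExpander.mul_sum_sum_sub_sq_le (hexp : IsExpander w γ) (hγ : 0 ≤ γ)
    (hw0 : ∀ x y, 0 ≤ w x y) (f : V → ℝ) :
    γ * ∑ x, ∑ y, (f x - f y) ^ 2 ≤
      2 * ∑ x, ∑ y, w x y * (|f x - f y| * (|f x| + |f y|)) := calc
  _ ≤ ∑ x, ∑ y, γ * (2 * |f x * |f x| - (f y * |f y|)|) := by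
    simp only [mul_sum]
    gcongr
    exact sq_sub_le_two_mul_abs_sub_mul_abs _ _
  _ = 2 * ∑ x, ∑ y, γ * |f x * |f x| - (f y * |f y|)| := by
    simp only [mul_sum]
    ring_nf
  _ ≤ 2 * ∑ x, ∑ y, w x y * |f x * |f x| - (f y * |f y|)| := by
    gcongr 2 * ?_
    exact sum_sum_mul_abs_sub_le_of_forall_cut _ hexp.sum_sum_mul_abs_indicator_sub_indicator_le
  _ ≤ _ := by
    gcongr 2 * ?_
    exact sum_le_sum fun x _ => sum_le_sum fun y _ =>
      mul_le_mul_of_nonneg_left (abs_mul_abs_sub_mul_abs_le _ _) (hw0 x y)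

lemma IsExpander.sq_mul_sum_sum_sub_sq_le_of_sum_eq_zero (hexp : IsExpander w γ) (hγ : 0 ≤ γ)
    (hw0 : ∀ x y, 0 ≤ w x y) (hw1 : ∀ x y, w x y ≤ 1) {f : V → ℝ} (hf : ∑ x, f x = 0) :
    γ ^ 2 * ∑ x, ∑ y, (f x - f y) ^ 2 ≤ 8 * ∑ x, ∑ y, w x y * (f x - f y) ^ 2 := by
  set Q := ∑ x, ∑ y, (f x - f y) ^ 2
  set Qw := ∑ x, ∑ y, w x y * (f x - f y) ^ 2
  have hQ : Q = 2 * (Fintype.card V * ∑ x, f x ^ 2) := by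
    simpa [hf] using sum_sum_mul_mul_sub_sq 1 f
  have hB := sq_sum_sum_mul_abs_sub_mul_add_abs_le hw0 hw1 f
  rw [show 4 * (Fintype.card V : ℝ) * ∑ x, f x ^ 2 = 2 * Q by rw [hQ]; ring] at hB
  have hγQ := hexp.mul_sum_sum_sub_sq_le hγ hw0 f
  have hQ0 : 0 ≤ Q := by positivity
  rcases hQ0.eq_or_lt with hQ_eq | hQ_pos
  · rw [← hQ_eq, mul_zero]
    exact mul_nonneg (by norm_num) <|
      sum_nonneg fun x _ => sum_nonneg fun y _ => mul_nonneg (hw0 x y) (sq_nonneg _)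
  · refine le_of_mul_le_mul_right ?_ hQ_pos
    nlinarith [pow_le_pow_left₀ (by positivity) hγQ 2]

lemma IsExpander.sq_mul_sum_sum_sub_sq_le (hexp : IsExpander w γ) (hγ : 0 ≤ γ)
    (hw0 : ∀ x y, 0 ≤ w x y) (hw1 : ∀ x y, w x y ≤ 1) (f : V → ℝ) :
    γ ^ 2 * ∑ x, ∑ y, (f x - f y) ^ 2 ≤ 8 * ∑ x, ∑ y, w x y * (f x - f y) ^ 2 := by
  rcases isEmpty_or_nonempty V with hV | hV
  · simp
  have h := hexp.sq_mul_sum_sum_sub_sq_le_of_sum_eq_zero hγ hw0 hw1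
    (f := fun x => f x - (∑ y, f y) / Fintype.card V)
    (by simp [sum_sub_distrib, mul_div_cancel₀, Fintype.card_ne_zero])
  simpa only [sub_sub_sub_cancel_right] using h

lemma IsExpander.mul_card_sub_one_le_wdeg (hexp : IsExpander w γ) (hloop : ∀ x, w x x = 0)
    (v : V) : γ * (Fintype.card V - 1) ≤ wdeg w v := by
  have h := hexp {v}
  rwa [card_singleton, Nat.cast_one, mul_one, sum_singleton, compl_singleton,
    sum_erase _ (hloop v)] at h

lemma IsExpander.wdeg_pos (hexp : IsExpander w γ) (hγ : 0 < γ) (hloop : ∀ x, w x x = 0)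
    (hV : 2 ≤ Fintype.card V) (v : V) : 0 < wdeg w v := by
  have hV' : (2 : ℝ) ≤ Fintype.card V := by exact_mod_cast hV
  exact (mul_pos hγ (by linarith)).trans_le (hexp.mul_card_sub_one_le_wdeg hloop v)

lemma IsExpander.le_one (hexp : IsExpander w γ) (hw1 : ∀ x y, w x y ≤ 1)
    (hloop : ∀ x, w x x = 0) (hV : 2 ≤ Fintype.card V) : γ ≤ 1 := by
  have hV' : (2 : ℝ) ≤ Fintype.card V := by exact_mod_cast hV
  obtain ⟨v⟩ : Nonempty V := Fintype.card_pos_iff.1 (by omega)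
  have h := (hexp.mul_card_sub_one_le_wdeg hloop v).trans (wdeg_le_card_sub_one hw1 hloop v)
  nlinarith

lemma IsExpander.mul_card_sq_le_two_mul_sum_wdeg (hexp : IsExpander w γ) (hγ : 0 ≤ γ)
    (hloop : ∀ x, w x x = 0) (hV : 2 ≤ Fintype.card V) :
    γ * Fintype.card V ^ 2 ≤ 2 * ∑ v, wdeg w v := by
  have hV' : (2 : ℝ) ≤ Fintype.card V := by exact_mod_cast hV
  have h := sum_le_sum fun v (_ : v ∈ univ) => hexp.mul_card_sub_one_le_wdeg hloop v
  rw [sum_const, card_univ, nsmul_eq_mul] at h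
  nlinarith [mul_nonneg (mul_nonneg hγ (by linarith : (0 : ℝ) ≤ Fintype.card V))
    (by linarith : (0 : ℝ) ≤ Fintype.card V - 2)]

lemma IsExpander.mul_statDist_le_statDist (hexp : IsExpander w γ) (hγ : 0 ≤ γ)
    (hw1 : ∀ x y, w x y ≤ 1) (hloop : ∀ x, w x x = 0) (x y : V) :
    γ * statDist w y ≤ statDist w x := by
  have h : γ * wdeg w y ≤ wdeg w x := calc
    γ * wdeg w y ≤ γ * (Fintype.card V - 1) := by
      gcongr; exact wdeg_le_card_sub_one hw1 hloop y
    _ ≤ wdeg w x := hexp.mul_card_sub_one_le_wdeg hloop x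
  have hV : (1 : ℝ) ≤ Fintype.card V := by exact_mod_cast Fintype.card_pos_iff.2 ⟨x⟩
  have hW : 0 ≤ ∑ v, wdeg w v := sum_nonneg fun v _ =>
    (mul_nonneg hγ (by linarith)).trans (hexp.mul_card_sub_one_le_wdeg hloop v)
  simp only [statDist, ← mul_div_assoc]
  exact div_le_div_of_nonneg_right h hW

lemma lazyStep_nonneg (hw0 : ∀ x y, 0 ≤ w x y) (x y : V) : 0 ≤ lazyStep w x y := by
  have := hw0 x y
  have := wdeg_nonneg hw0 x
  unfold lazyStep
  split_ifs <;> positivity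

lemma sum_lazyStep {x : V} (hd : 0 < wdeg w x) : ∑ y, lazyStep w x y = 1 := by
  simp only [lazyStep, sum_add_distrib, sum_ite_eq, mem_univ, if_true, ← sum_div]
  rw [show ∑ y, w x y = wdeg w x from rfl]
  field_simp
  norm_num

lemma lazyStep_mem_rowStochastic (hw0 : ∀ x y, 0 ≤ w x y) (hd : ∀ v, 0 < wdeg w v) :
    lazyStep w ∈ rowStochastic ℝ V :=
  mem_rowStochastic_iff_sum.2 ⟨lazyStep_nonneg hw0, fun _ => sum_lazyStep (hd _)⟩

lemma half_le_lazyStep_self (hw0 : ∀ x y, 0 ≤ w x y) (x : V) : 1 / 2 ≤ lazyStep w x x := by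
  have := hw0 x x
  have := wdeg_nonneg hw0 x
  have : 0 ≤ w x x / (2 * wdeg w x) := by positivity
  simp only [lazyStep, if_true]
  linarith

lemma statDist_mul_lazyStep_of_ne {x y : V} (hd : 0 < wdeg w x) (hxy : x ≠ y) :
    statDist w x * lazyStep w x y = w x y / (2 * ∑ v, wdeg w v) := by
  simp only [statDist, lazyStep, if_neg hxy, zero_add]
  field_simp

lemma vecMul_lazyStep (hsymm : ∀ x y, w x y = w y x) (hd : ∀ v, 0 < wdeg w v) :
    statDist w ᵥ* lazyStep w = statDist w := by
  have hrev (x y : V) : statDist w x * lazyStep w x y = statDist w y * lazyStep w y x := by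
    rcases eq_or_ne x y with rfl | hxy
    · rfl
    rw [statDist_mul_lazyStep_of_ne (hd x) hxy, statDist_mul_lazyStep_of_ne (hd y) hxy.symm,
      hsymm]
  ext y
  simp only [vecMul, dotProduct, hrev _ y, ← mul_sum, sum_lazyStep (hd y), mul_one]

lemma dirichletForm_lazyStep (hd : ∀ v, 0 < wdeg w v) (u : V → ℝ) :
    dirichletForm (lazyStep w) (statDist w) u =
      (∑ x, ∑ y, w x y * (u x - u y) ^ 2) / (4 * ∑ v, wdeg w v) := by
  have h (x y : V) : statDist w x * lazyStep w x y * (u x - u y) ^ 2 =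
      w x y * (u x - u y) ^ 2 / (2 * ∑ v, wdeg w v) := by
    rcases eq_or_ne x y with rfl | hxy
    · simp
    rw [statDist_mul_lazyStep_of_ne (hd x) hxy, div_mul_eq_mul_div]
  simp only [dirichletForm, h, ← sum_div, div_div]
  ring_nf

lemma IsExpander.mul_sum_statDist_mul_sq_le_dirichletForm (hexp : IsExpander w γ) (hγ : 0 < γ)
    (hw0 : ∀ x y, 0 ≤ w x y) (hw1 : ∀ x y, w x y ≤ 1) (hloop : ∀ x, w x x = 0)
    (hV : 2 ≤ Fintype.card V) {u : V → ℝ} (hu : statDist w ⬝ᵥ u = 0) :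
    γ ^ 3 / 32 * ∑ x, statDist w x * u x ^ 2 ≤ dirichletForm (lazyStep w) (statDist w) u := by
  have hd := hexp.wdeg_pos hγ hloop hV
  have : Nonempty V := Fintype.card_pos_iff.1 (by omega)
  set π := statDist w
  set W := ∑ v, wdeg w v
  set n : ℝ := (Fintype.card V : ℝ)
  set Su := ∑ x, π x * u x ^ 2
  set Q := ∑ x, ∑ y, (u x - u y) ^ 2
  set Qw := ∑ x, ∑ y, w x y * (u x - u y) ^ 2
  have hW0 : 0 < W := sum_wdeg_pos hd
  have hSu0 : 0 ≤ Su := sum_nonneg fun x _ => mul_nonneg (statDist_pos hd x).le (sq_nonneg _)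
  have hWπ (x : V) : W * π x ≤ n := by
    rw [sum_wdeg_mul_statDist hd]
    linarith [wdeg_le_card_sub_one hw1 hloop x]
  have hSuQ : W ^ 2 * (2 * Su) ≤ n ^ 2 * Q := by
    rw [show 2 * Su = ∑ x, ∑ y, π x * π y * (u x - u y) ^ 2 by
      rw [sum_sum_mul_mul_sub_sq, sum_statDist hd, show ∑ x, π x * u x = 0 from hu]; ring]
    simp only [Q, mul_sum]
    refine sum_le_sum fun x _ => sum_le_sum fun y _ => ?_
    have hxy : (W * π x) * (W * π y) ≤ n * n :=
      mul_le_mul (hWπ x) (hWπ y) (mul_nonneg hW0.le (statDist_pos hd y).le) (by positivity)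
    nlinarith [sq_nonneg (u x - u y)]
  have hWn := hexp.mul_card_sq_le_two_mul_sum_wdeg hγ.le hloop hV
  have hQ := hexp.sq_mul_sum_sum_sub_sq_le hγ.le hw0 hw1 u
  rw [dirichletForm_lazyStep hd, le_div_iff₀ (by positivity)]
  refine le_of_mul_le_mul_left ?_ (by positivity : 0 < n ^ 2)
  calc n ^ 2 * (γ ^ 3 / 32 * Su * (4 * W))
      = γ ^ 2 * Su * W * (γ * n ^ 2) / 8 := by ring
    _ ≤ γ ^ 2 * Su * W * (2 * W) / 8 := by gcongr
    _ = γ ^ 2 * (W ^ 2 * (2 * Su)) / 8 := by ring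
    _ ≤ γ ^ 2 * (n ^ 2 * Q) / 8 := by gcongr
    _ = n ^ 2 * (γ ^ 2 * Q) / 8 := by ring
    _ ≤ n ^ 2 * (8 * Qw) / 8 := by gcongr
    _ = n ^ 2 * Qw := by ring

lemma IsExpander.sum_statDist_mul_lazyStep_mulVec_sq_le (hexp : IsExpander w γ) (hγ : 0 < γ)
    (hw : IsWeightedGraph w) (hV : 2 ≤ Fintype.card V) {u : V → ℝ}
    (hu : statDist w ⬝ᵥ u = 0) :
    ∑ x, statDist w x * (lazyStep w *ᵥ u) x ^ 2 ≤
      (1 - γ ^ 3 / 64) * ∑ x, statDist w x * u x ^ 2 := by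
  obtain ⟨hsymm, hw01, hloop⟩ := hw
  have hw0 x y := (hw01 x y).1
  have hd := hexp.wdeg_pos hγ hloop hV
  have : Nonempty V := Fintype.card_pos_iff.1 (by omega)
  have h := sum_mul_mulVec_sq_add_dirichletForm_le (lazyStep_mem_rowStochastic hw0 hd)
    (half_le_lazyStep_self hw0) (fun x => (statDist_pos hd x).le) (vecMul_lazyStep hsymm hd) u
  have := hexp.mul_sum_statDist_mul_sq_le_dirichletForm hγ hw0 (fun x y => (hw01 x y).2) hloop
    hV hu
  linarith

lemma IsExpander.sq_lazyStep_pow_apply_sub_statDist_le (hexp : IsExpander w γ) (hγ : 0 < γ)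
    (hw : IsWeightedGraph w) (hV : 2 ≤ Fintype.card V) (t : ℕ) (x y : V) :
    ((lazyStep w ^ t) x y - statDist w y) ^ 2 ≤ (1 - γ ^ 3 / 64) ^ t / γ := by
  obtain ⟨hsymm, hw01, hloop⟩ := id hw
  have hw0 x y := (hw01 x y).1
  have hw1 x y := (hw01 x y).2
  have hd := hexp.wdeg_pos hγ hloop hV
  have : Nonempty V := Fintype.card_pos_iff.1 (by omega)
  have hβ : 0 ≤ 1 - γ ^ 3 / 64 := by
    have := pow_le_one₀ hγ.le (hexp.le_one hw1 hloop hV) (n := 3)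
    linarith
  have h := sq_apply_sub_le_of_contraction (pow_nonneg hβ t) (statDist_pos hd) (sum_statDist hd)
    (sum_row_of_mem_rowStochastic (pow_mem (lazyStep_mem_rowStochastic hw0 hd) t))
    (fun u hu => sum_mul_pow_mulVec_sq_le hβ (vecMul_lazyStep hsymm hd)
      (fun v hv => hexp.sum_statDist_mul_lazyStep_mulVec_sq_le hγ hw hV hv) hu t) x y
  refine h.trans ?_
  rw [mul_div_assoc, div_eq_mul_one_div _ γ]
  refine mul_le_mul_of_nonneg_left ?_ (pow_nonneg hβ t)
  rw [div_le_div_iff₀ (statDist_pos hd x) hγ]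
  linarith [hexp.mul_statDist_le_statDist hγ.le hw1 hloop x y]

lemma IsExpander.mixingTime_le (hexp : IsExpander w γ) (hγ : 0 < γ) (hw : IsWeightedGraph w)
    (hV : 2 ≤ Fintype.card V) : mixingTime w ≤ ⌈64 / γ ^ 3 * Real.log (16 / γ)⌉₊ := by
  set T := ⌈64 / γ ^ 3 * Real.log (16 / γ)⌉₊
  have hγ1 : γ ^ 3 ≤ 1 := pow_le_one₀ hγ.le (hexp.le_one (fun x y => (hw.2.1 x y).2) hw.2.2 hV)
  have hT : (1 - γ ^ 3 / 64) ^ T ≤ γ / 16 := by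
    refine one_sub_pow_le_of_log_inv_le (by linarith) (by positivity) ?_
    calc Real.log (γ / 16)⁻¹ = γ ^ 3 / 64 * (64 / γ ^ 3 * Real.log (16 / γ)) := by
          field_simp
      _ ≤ γ ^ 3 / 64 * T := by gcongr; exact Nat.le_ceil _
  refine Nat.sInf_le fun x y => abs_le_of_sq_le_sq ?_ (by norm_num)
  calc ((lazyStep w ^ T) x y - statDist w y) ^ 2 ≤ (1 - γ ^ 3 / 64) ^ T / γ :=
        hexp.sq_lazyStep_pow_apply_sub_statDist_le hγ hw hV T x y
    _ ≤ γ / 16 / γ := by gcongr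
    _ = (1 / 4) ^ 2 := by field_simp; norm_num

end WeightedGraph

/-- For every `γ > 0` there exists `N` such that for all `n ≥ N`: every
loopless weighted graph on `n` vertices, with edge weights in `[0,1]`, that is a
`γ`-expander has lazy random walk mixing time at most `(64/γ⁴)·log n`. -/
theorem mixingTime_le_of_expander (γ : ℝ) (hγ : 0 < γ) :
    ∃ N : ℕ, ∀ n ≥ N, ∀ (V : Type) [Fintype V] [DecidableEq V], Fintype.card V = n →
      ∀ w : V → V → ℝ, IsWeightedGraph w → IsExpander w γ →
        (mixingTime w : ℝ) ≤ 64 / γ ^ 4 * Real.log n := by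
  have hlog : Tendsto (fun n : ℕ => 64 / γ ^ 4 * Real.log n) atTop atTop :=
    (Real.tendsto_log_atTop.comp tendsto_natCast_atTop_atTop).const_mul_atTop (by positivity)
  obtain ⟨N, hN⟩ := eventually_atTop.1 <|
    (hlog.eventually_ge_atTop ⌈64 / γ ^ 3 * Real.log (16 / γ)⌉₊).and (eventually_ge_atTop 2)
  refine ⟨N, fun n hn V _ _ hcard w hw hexp => ?_⟩
  obtain ⟨hT, h2⟩ := hN n hn
  exact (Nat.cast_le.2 (hexp.mixingTime_le hγ hw (hcard ▸ h2))).trans hT
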